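/- Suppose the ground block of H is diagonal, H (inl i) (inl i') = 0 for i ≠ i', with diagonal entries 𝓔_i = H (inl i) (inl i) pairwise distinct, and suppose every ground state is coupled to the excited manifold: for every i : Fin Ng there exists j : Fin Ne with H (inl i) (inr j) ≠ 0. Then no dark state exists: there is no density matrix ρ with L(ρ) = 0 and ρ = P ρ P. -/

import Mathlib

open Matrix Complex BigOperators ComplexOrder

/-- Projection onto the ground-state indices. -/
noncomputable def Pg (Ng Ne : ℕ) : Matrix (Fin Ng ⊕ Fin Ne) (Fin Ng ⊕ Fin Ne) ℂ :=
  Matrix.diagonal (Sum.elim (fun _ => 1) (fun _ => 0))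

/-- Projection onto the excited-state indices. -/
noncomputable def Qe (Ng Ne : ℕ) : Matrix (Fin Ng ⊕ Fin Ne) (Fin Ng ⊕ Fin Ne) ℂ :=
  1 - Pg Ng Ne

/-- Jump operator |g_i⟩⟨e_j|. -/
noncomputable def jump (Ng Ne : ℕ) (i : Fin Ng) (j : Fin Ne) :
    Matrix (Fin Ng ⊕ Fin Ne) (Fin Ng ⊕ Fin Ne) ℂ :=
  Matrix.single (Sum.inl i) (Sum.inr j) 1

/-- Decay operator Γ = Σ γ_{ij} σ_{ij}ᴴ σ_{ij}. -/
noncomputable def Gam (Ng Ne : ℕ) (γ : Fin Ng → Fin Ne → ℝ) :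
    Matrix (Fin Ng ⊕ Fin Ne) (Fin Ng ⊕ Fin Ne) ℂ :=
  ∑ i, ∑ j, (γ i j : ℂ) • ((jump Ng Ne i j)ᴴ * jump Ng Ne i j)

/-- The Lindblad generator. -/
noncomputable def Lindblad (Ng Ne : ℕ) (H : Matrix (Fin Ng ⊕ Fin Ne) (Fin Ng ⊕ Fin Ne) ℂ)
    (γ : Fin Ng → Fin Ne → ℝ) (ρ : Matrix (Fin Ng ⊕ Fin Ne) (Fin Ng ⊕ Fin Ne) ℂ) :
    Matrix (Fin Ng ⊕ Fin Ne) (Fin Ng ⊕ Fin Ne) ℂ :=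
  (-Complex.I) • (H * ρ - ρ * H) +
    ∑ i, ∑ j, (γ i j : ℂ) •
      (jump Ng Ne i j * ρ * (jump Ng Ne i j)ᴴ -
        (1 / 2 : ℂ) • ((jump Ng Ne i j)ᴴ * jump Ng Ne i j * ρ +
          ρ * ((jump Ng Ne i j)ᴴ * jump Ng Ne i j)))

/-- A dark state: a density matrix annihilated by the Lindbladian and supported on the
ground-state subspace. -/
def IsDarkState (Ng Ne : ℕ) (H : Matrix (Fin Ng ⊕ Fin Ne) (Fin Ng ⊕ Fin Ne) ℂ)
    (γ : Fin Ng → Fin Ne → ℝ) (ρ : Matrix (Fin Ng ⊕ Fin Ne) (Fin Ng ⊕ Fin Ne) ℂ) : Prop :=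
  ρ.PosSemidef ∧ ρ.trace = 1 ∧ Lindblad Ng Ne H γ ρ = 0 ∧ ρ = Pg Ng Ne * ρ * Pg Ng Ne

/-!
A state supported on the ground manifold is killed by every jump operator `|gᵢ⟩⟨eⱼ|` acting
on the right and by its adjoint acting on the left, so the dissipator vanishes on it and
`L ρ = 0` reduces to `[H, ρ] = 0`. Write `ρ = A ⊕ 0` and let the ground block of `H` be
`diag 𝓔` with coupling block `B`. The ground block of the commutator gives `diag 𝓔 * A =
A * diag 𝓔`, so `A` is diagonal because the `𝓔ᵢ` are distinct; the ground–excited block gives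
`A * B = 0`, and since no row of `B` vanishes, `A = 0`, contradicting `tr ρ = 1`.
-/

namespace Matrix

variable {ι κ R : Type*} [DecidableEq ι]

theorem toBlocks₁₁_eq_diagonal [Zero R] {H : Matrix (ι ⊕ κ) (ι ⊕ κ) R}
    (hH : ∀ i i', i ≠ i' → H (Sum.inl i) (Sum.inl i') = 0) :
    H.toBlocks₁₁ = diagonal fun i => H (Sum.inl i) (Sum.inl i) := by
  ext i i'
  by_cases hii' : i = i'
  · subst hii'; simp [toBlocks₁₁]
  · simp [toBlocks₁₁, hH i i' hii', hii']

variable [Fintype ι] [CommRing R] [NoZeroDivisors R]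

theorem apply_eq_zero_of_diagonal_mul_eq_mul_diagonal
    {d : ι → R} (hd : Function.Injective d) {A : Matrix ι ι R}
    (h : diagonal d * A = A * diagonal d) {i i' : ι} (hii' : i ≠ i') : A i i' = 0 := by
  have h' : d i * A i i' = A i i' * d i' := by simpa using congrFun₂ h i i'
  rw [mul_comm, ← sub_eq_zero, ← mul_sub] at h'
  exact (mul_eq_zero.mp h').resolve_right (sub_ne_zero.mpr (hd.ne hii'))

theorem eq_zero_of_commute_fromBlocks [Fintype κ]
    {d : ι → R} (hd : Function.Injective d) {B : Matrix ι κ R} (hB : ∀ i, ∃ j, B i j ≠ 0)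
    {C : Matrix κ ι R} {D : Matrix κ κ R} {A : Matrix ι ι R}
    (h : Commute (fromBlocks (diagonal d) B C D) (fromBlocks A 0 0 0)) : A = 0 := by
  have h' := h.eq
  simp only [fromBlocks_multiply, fromBlocks_inj, Matrix.mul_zero, Matrix.zero_mul,
    add_zero] at h'
  obtain ⟨hdA, hAB, -, -⟩ := h'
  have hoff {i i'} (hii' : i ≠ i') : A i i' = 0 :=
    apply_eq_zero_of_diagonal_mul_eq_mul_diagonal hd hdA hii'
  have hdiag (i) : A i i = 0 := by
    obtain ⟨j, hj⟩ := hB i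
    have hAB_ij : (A * B) i j = A i i * B i j :=
      Fintype.sum_eq_single i fun k hk => by simp only [hoff hk.symm, zero_mul]
    rw [← hAB, zero_apply] at hAB_ij
    exact (mul_eq_zero.mp hAB_ij.symm).resolve_right hj
  ext i i'
  by_cases hii' : i = i'
  · subst hii'; exact hdiag i
  · exact hoff hii'

end Matrix

section Lindblad

variable {Ng Ne : ℕ}

theorem Pg_eq_fromBlocks : Pg Ng Ne = fromBlocks 1 0 0 0 := by
  rw [Pg, ← diagonal_zero, ← diagonal_one, fromBlocks_diagonal]

theorem Pg_mul_mul_Pg_eq_fromBlocks (ρ : Matrix (Fin Ng ⊕ Fin Ne) (Fin Ng ⊕ Fin Ne) ℂ) :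
    Pg Ng Ne * ρ * Pg Ng Ne = fromBlocks ρ.toBlocks₁₁ 0 0 0 := by
  conv_lhs => rw [Pg_eq_fromBlocks, ← fromBlocks_toBlocks ρ]
  simp [fromBlocks_multiply]

theorem jump_mul_Pg (i : Fin Ng) (j : Fin Ne) : jump Ng Ne i j * Pg Ng Ne = 0 := by
  ext a (b | b) <;> simp [jump, Pg, single_apply]

theorem Pg_mul_jump_conjTranspose (i : Fin Ng) (j : Fin Ne) :
    Pg Ng Ne * (jump Ng Ne i j)ᴴ = 0 := by
  ext (a | a) b <;> simp [jump, Pg, single_apply]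

theorem Lindblad_Pg_mul_mul_Pg (H : Matrix (Fin Ng ⊕ Fin Ne) (Fin Ng ⊕ Fin Ne) ℂ)
    (γ : Fin Ng → Fin Ne → ℝ) (ρ : Matrix (Fin Ng ⊕ Fin Ne) (Fin Ng ⊕ Fin Ne) ℂ) :
    Lindblad Ng Ne H γ (Pg Ng Ne * ρ * Pg Ng Ne) =
      (-I) • (H * (Pg Ng Ne * ρ * Pg Ng Ne) - Pg Ng Ne * ρ * Pg Ng Ne * H) := by
  set τ := Pg Ng Ne * ρ * Pg Ng Ne
  have hleft (i j) : jump Ng Ne i j * τ = 0 := by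
    simp only [τ, ← Matrix.mul_assoc, jump_mul_Pg, Matrix.zero_mul]
  have hright (i j) : τ * (jump Ng Ne i j)ᴴ = 0 := by
    simp only [τ, Matrix.mul_assoc, Pg_mul_jump_conjTranspose, Matrix.mul_zero]
  have hdissipator (i j) : jump Ng Ne i j * τ * (jump Ng Ne i j)ᴴ - (1 / 2 : ℂ) •
      ((jump Ng Ne i j)ᴴ * jump Ng Ne i j * τ + τ * ((jump Ng Ne i j)ᴴ * jump Ng Ne i j))
        = 0 := by
    rw [hleft, Matrix.mul_assoc, hleft, ← Matrix.mul_assoc, hright]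
    simp only [Matrix.zero_mul, Matrix.mul_zero, add_zero, smul_zero, sub_zero]
  simp only [Lindblad, hdissipator, smul_zero, Finset.sum_const_zero, add_zero]

theorem commute_of_Lindblad_eq_zero {H ρ : Matrix (Fin Ng ⊕ Fin Ne) (Fin Ng ⊕ Fin Ne) ℂ}
    {γ : Fin Ng → Fin Ne → ℝ} (hρ : ρ = Pg Ng Ne * ρ * Pg Ng Ne)
    (hL : Lindblad Ng Ne H γ ρ = 0) : Commute H ρ := by
  rw [hρ, Lindblad_Pg_mul_mul_Pg, smul_eq_zero, sub_eq_zero, ← hρ] at hL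
  exact hL.resolve_left (neg_ne_zero.mpr I_ne_zero)

end Lindblad

theorem no_dark_state_of_nondegenerate_ground_spectrum_general
    (Ng Ne : ℕ)
    (H : Matrix (Fin Ng ⊕ Fin Ne) (Fin Ng ⊕ Fin Ne) ℂ)
    (hdiag : ∀ i i' : Fin Ng, i ≠ i' → H (Sum.inl i) (Sum.inl i') = 0)
    (hdistinct : ∀ i i' : Fin Ng, i ≠ i' →
      H (Sum.inl i) (Sum.inl i) ≠ H (Sum.inl i') (Sum.inl i'))
    (hcoupled : ∀ i : Fin Ng, ∃ j : Fin Ne, H (Sum.inl i) (Sum.inr j) ≠ 0)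
    (γ : Fin Ng → Fin Ne → ℝ) :
    ¬ ∃ ρ : Matrix (Fin Ng ⊕ Fin Ne) (Fin Ng ⊕ Fin Ne) ℂ,
        ρ.PosSemidef ∧ ρ.trace = 1 ∧ Lindblad Ng Ne H γ ρ = 0 ∧
        ρ = Pg Ng Ne * ρ * Pg Ng Ne := by
  rintro ⟨ρ, -, htrace, hL, hsupp⟩
  have hcomm := commute_of_Lindblad_eq_zero hsupp hL
  have hρ : ρ = fromBlocks ρ.toBlocks₁₁ 0 0 0 := hsupp.trans (Pg_mul_mul_Pg_eq_fromBlocks ρ)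
  have hH : H = fromBlocks (diagonal fun i => H (Sum.inl i) (Sum.inl i))
      H.toBlocks₁₂ H.toBlocks₂₁ H.toBlocks₂₂ := by
    rw [← toBlocks₁₁_eq_diagonal hdiag, fromBlocks_toBlocks]
  have hspectrum : Function.Injective fun i => H (Sum.inl i) (Sum.inl i) :=
    fun i i' h => by_contra fun hii' => hdistinct i i' hii' h
  rw [hH, hρ] at hcomm
  rw [hρ, eq_zero_of_commute_fromBlocks hspectrum hcoupled hcomm, fromBlocks_zero,
    trace_zero] at htrace
  exact zero_ne_one htrace

theorem no_dark_state_of_nondegenerate_ground_spectrum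
    (Ng Ne : ℕ) (hNg : 1 ≤ Ng) (hNe : 1 ≤ Ne)
    (H : Matrix (Fin Ng ⊕ Fin Ne) (Fin Ng ⊕ Fin Ne) ℂ) (hH : H.IsHermitian)
    (hdiag : ∀ i i' : Fin Ng, i ≠ i' → H (Sum.inl i) (Sum.inl i') = 0)
    (hdistinct : ∀ i i' : Fin Ng, i ≠ i' →
      H (Sum.inl i) (Sum.inl i) ≠ H (Sum.inl i') (Sum.inl i'))
    (hcoupled : ∀ i : Fin Ng, ∃ j : Fin Ne, H (Sum.inl i) (Sum.inr j) ≠ 0)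
    (γ : Fin Ng → Fin Ne → ℝ) (hγ : ∀ i j, 0 ≤ γ i j)
    (hγpos : ∀ j, 0 < ∑ i, γ i j) :
    ¬ ∃ ρ : Matrix (Fin Ng ⊕ Fin Ne) (Fin Ng ⊕ Fin Ne) ℂ,
        ρ.PosSemidef ∧ ρ.trace = 1 ∧ Lindblad Ng Ne H γ ρ = 0 ∧
        ρ = Pg Ng Ne * ρ * Pg Ng Ne :=
  no_dark_state_of_nondegenerate_ground_spectrum_general Ng Ne H hdiag hdistinct hcoupled γ
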